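/- Let μ ∈ ℝ^d be a unit vector and let A : ℝ^d → ℝ^d be an invertible linear map with operator norm ‖A‖_op ≤ 1 that maps the hyperplane μ^⊥ into itself. Then the transformation 𝒢(y) = Exp_μ(A(Log_μ(y))) is injective on S^{d-1}\{−μ}: if y₁, y₂ are unit vectors different from −μ with 𝒢(y₁) = 𝒢(y₂), then y₁ = y₂. -/

import Mathlib

open scoped RealInnerProductSpace

noncomputable def ExpMap {d : ℕ} (μ v : EuclideanSpace ℝ (Fin d)) :
    EuclideanSpace ℝ (Fin d) :=
  Real.cos ‖v‖ • μ + (Real.sin ‖v‖ / ‖v‖) • v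

noncomputable def LogMap {d : ℕ} (μ x : EuclideanSpace ℝ (Fin d)) :
    EuclideanSpace ℝ (Fin d) :=
  (Real.arccos ⟪x, μ⟫ / Real.sin (Real.arccos ⟪x, μ⟫)) • (x - ⟪x, μ⟫ • μ)

/-!
`Exp_μ` and `Log_μ` are mutually inverse bijections between the open ball of radius `π` in the
tangent space `μ^⊥` and the punctured sphere `S^{d-1} \ {-μ}`. Hence `Log_μ` is injective on the
punctured sphere and `Exp_μ` is injective on the ball. Since `‖A‖ ≤ 1` and `A` preserves `μ^⊥`,
`A` maps that ball into itself, so `𝒢 = Exp_μ ∘ A ∘ Log_μ` is a composite of injective maps.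
-/

open Real Set Metric

def tangentBall {E : Type*} [NormedAddCommGroup E] [InnerProductSpace ℝ E] (μ : E) : Set E :=
  {v | ⟪v, μ⟫ = 0 ∧ ‖v‖ < π}

theorem mapsTo_tangentBall {E : Type*} [NormedAddCommGroup E] [InnerProductSpace ℝ E] {μ : E}
    {A : E →L[ℝ] E} (hA : ‖A‖ ≤ 1) (hAμ : ∀ v, ⟪v, μ⟫ = 0 → ⟪A v, μ⟫ = 0) :
    MapsTo A (tangentBall μ) (tangentBall μ) := fun v ⟨hvμ, hv⟩ =>
  ⟨hAμ v hvμ, (A.le_of_opNorm_le hA v).trans_lt (by rwa [one_mul])⟩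

section

variable {d : ℕ} {μ x v : EuclideanSpace ℝ (Fin d)}

theorem neg_one_lt_inner_of_ne_neg (hμ : ‖μ‖ = 1) (hx : ‖x‖ = 1) (hxμ : x ≠ -μ) :
    -1 < ⟪x, μ⟫ :=
  (neg_one_le_real_inner_of_norm_eq_one hx hμ).lt_of_ne
    fun h => hxμ ((inner_eq_neg_one_iff_of_norm_eq_one hx hμ).1 h.symm)

theorem arccos_inner_lt_pi (hμ : ‖μ‖ = 1) (hx : ‖x‖ = 1) (hxμ : x ≠ -μ) :
    arccos ⟪x, μ⟫ < π :=
  arccos_lt_pi.2 (neg_one_lt_inner_of_ne_neg hμ hx hxμ)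

theorem inner_logMap_self (hμ : ‖μ‖ = 1) (x : EuclideanSpace ℝ (Fin d)) :
    ⟪LogMap μ x, μ⟫ = 0 := by
  rw [LogMap, real_inner_smul_left, inner_sub_left, real_inner_smul_left,
    inner_self_eq_one_of_norm_eq_one hμ, mul_one, sub_self, mul_zero]

theorem norm_sub_inner_smul_eq_sin_arccos (hμ : ‖μ‖ = 1) (hx : ‖x‖ = 1) :
    ‖x - ⟪x, μ⟫ • μ‖ = sin (arccos ⟪x, μ⟫) := by
  have hsq : ‖x - ⟪x, μ⟫ • μ‖ ^ 2 = 1 - ⟪x, μ⟫ ^ 2 := by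
    rw [norm_sub_sq_real, real_inner_smul_right, norm_smul, hx, hμ, Real.norm_eq_abs]
    ring_nf
    rw [sq_abs]
    ring
  rw [sin_arccos, ← hsq, Real.sqrt_sq (norm_nonneg _)]

theorem norm_logMap (hμ : ‖μ‖ = 1) (hx : ‖x‖ = 1) (hxμ : x ≠ -μ) :
    ‖LogMap μ x‖ = arccos ⟪x, μ⟫ := by
  have hθπ := arccos_inner_lt_pi hμ hx hxμ
  rw [LogMap, norm_smul, norm_sub_inner_smul_eq_sin_arccos hμ hx, Real.norm_eq_abs]
  rcases (arccos_nonneg ⟪x, μ⟫).eq_or_lt with hθ | hθ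
  · simp [← hθ]
  · have hsin := sin_pos_of_pos_of_lt_pi hθ hθπ
    rw [abs_of_pos (div_pos hθ hsin), div_mul_cancel₀ _ hsin.ne']

theorem mapsTo_logMap_tangentBall (hμ : ‖μ‖ = 1) :
    MapsTo (LogMap μ) (sphere 0 1 \ {-μ}) (tangentBall μ) := fun x ⟨hx, hxμ⟩ => by
  rw [mem_sphere_zero_iff_norm] at hx
  refine ⟨inner_logMap_self hμ x, ?_⟩
  rw [norm_logMap hμ hx hxμ]
  exact arccos_inner_lt_pi hμ hx hxμ

theorem inner_expMap_self (hμ : ‖μ‖ = 1) (hv : ⟪v, μ⟫ = 0) :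
    ⟪ExpMap μ v, μ⟫ = cos ‖v‖ := by
  rw [ExpMap, inner_add_left, real_inner_smul_left, real_inner_smul_left,
    inner_self_eq_one_of_norm_eq_one hμ, hv, mul_one, mul_zero, add_zero]

theorem expMap_logMap (hμ : ‖μ‖ = 1) (hx : ‖x‖ = 1) (hxμ : x ≠ -μ) :
    ExpMap μ (LogMap μ x) = x := by
  have hcos : cos (arccos ⟪x, μ⟫) = ⟪x, μ⟫ :=
    cos_arccos (neg_one_lt_inner_of_ne_neg hμ hx hxμ).le (real_inner_le_one_of_norm_eq_one hx hμ)
  have hθπ := arccos_inner_lt_pi hμ hx hxμ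
  rw [ExpMap, norm_logMap hμ hx hxμ, hcos]
  rcases (arccos_nonneg ⟪x, μ⟫).eq_or_lt with hθ | hθ
  · have hc1 : ⟪x, μ⟫ = 1 := by rw [← hcos, ← hθ, cos_zero]
    rw [← hθ, sin_zero, zero_div, zero_smul, add_zero, hc1, one_smul,
      (inner_eq_one_iff_of_norm_eq_one hx hμ).1 hc1]
  · have hsin := sin_pos_of_pos_of_lt_pi hθ hθπ
    rw [LogMap, smul_smul, div_mul_div_cancel₀ hθ.ne', div_self hsin.ne', one_smul,
      add_sub_cancel]

theorem logMap_expMap (hμ : ‖μ‖ = 1) (hv : v ∈ tangentBall μ) :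
    LogMap μ (ExpMap μ v) = v := by
  obtain ⟨hvμ, hvπ⟩ := hv
  rw [LogMap, inner_expMap_self hμ hvμ, arccos_cos (norm_nonneg v) hvπ.le, ExpMap,
    add_sub_cancel_left, smul_smul]
  rcases (norm_nonneg v).eq_or_lt with hv0 | hv0
  · rw [eq_comm, norm_eq_zero] at hv0
    simp [hv0]
  · rw [div_mul_div_cancel₀ (sin_pos_of_pos_of_lt_pi hv0 hvπ).ne', div_self hv0.ne', one_smul]

theorem injOn_logMap (hμ : ‖μ‖ = 1) : InjOn (LogMap μ) (sphere 0 1 \ {-μ}) :=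
  LeftInvOn.injOn fun _ ⟨hx, hxμ⟩ => expMap_logMap hμ (mem_sphere_zero_iff_norm.1 hx) hxμ

theorem injOn_expMap (hμ : ‖μ‖ = 1) : InjOn (ExpMap μ) (tangentBall μ) :=
  LeftInvOn.injOn fun _ hv => logMap_expMap hμ hv

end

/-- For an invertible linear map `A` with operator norm at most `1` mapping `μ^⊥` into
itself, the transformation `𝒢(y) = Exp_μ(A(Log_μ(y)))` is injective on `S^{d-1}\{−μ}`. -/
theorem mahalanobis_transform_injective {d : ℕ}
    (μ : EuclideanSpace ℝ (Fin d)) (hμ : ‖μ‖ = 1)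
    (A : EuclideanSpace ℝ (Fin d) ≃L[ℝ] EuclideanSpace ℝ (Fin d))
    (hAnorm : ‖(A : EuclideanSpace ℝ (Fin d) →L[ℝ] EuclideanSpace ℝ (Fin d))‖ ≤ 1)
    (hA : ∀ v : EuclideanSpace ℝ (Fin d), ⟪v, μ⟫ = 0 → ⟪A v, μ⟫ = 0)
    (y₁ y₂ : EuclideanSpace ℝ (Fin d)) (hy₁ : ‖y₁‖ = 1) (hy₂ : ‖y₂‖ = 1)
    (hy₁μ : y₁ ≠ -μ) (hy₂μ : y₂ ≠ -μ)
    (h : ExpMap μ (A (LogMap μ y₁)) = ExpMap μ (A (LogMap μ y₂))) :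
    y₁ = y₂ := by
  have hAinj : InjOn A (tangentBall μ) := A.injective.injOn
  have hinj : InjOn (ExpMap μ ∘ A ∘ LogMap μ) (sphere 0 1 \ {-μ}) :=
    (injOn_expMap hμ).comp (hAinj.comp (injOn_logMap hμ) (mapsTo_logMap_tangentBall hμ))
      ((mapsTo_tangentBall hAnorm hA).comp (mapsTo_logMap_tangentBall hμ))
  exact hinj ⟨mem_sphere_zero_iff_norm.2 hy₁, hy₁μ⟩ ⟨mem_sphere_zero_iff_norm.2 hy₂, hy₂μ⟩ h
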